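/- arXiv:1312.4109 — 10 statements merged into one kernel-verified Lean document; each statement's English description precedes it below -/
import Mathlib

section
/- Let S be an R-submodule of T₁ ⊕ T₂ where Tᵢ is an Rᵢ-module. Set S₁ = S/P₂S, S₂ = S/P₁S, S̄ = S/(P₁S + P₂S), with induced surjections pᵢ : Sᵢ → S̄. Then S is isomorphic as an R-module to the pullback {(x₁,x₂) ∈ S₁ × S₂ : p₁(x₁) = p₂(x₂)}, and ker pᵢ = PᵢSᵢ. In particular, every R-submodule of a direct sum T₁ ⊕ T₂ is a separated module. -/
set_option synthInstance.maxHeartbeats 1000000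
set_option maxHeartbeats 1000000

def PullbackRing {R₁ R₂ Rb : Type*} [CommRing R₁] [CommRing R₂] [CommRing Rb]
    (v₁ : R₁ →+* Rb) (v₂ : R₂ →+* Rb) : Subring (R₁ × R₂) where
  carrier := {x | v₁ x.1 = v₂ x.2}
  zero_mem' := by simp
  one_mem' := by simp
  add_mem' := by intro a b ha hb; simpa using congrArg₂ (· + ·) ha hb
  mul_mem' := by intro a b ha hb; simpa using congrArg₂ (· * ·) ha hb
  neg_mem' := by intro a ha; simpa using congrArg (- ·) ha

instance prodProdModule {R₁ R₂ M₁ M₂ : Type*} [CommRing R₁] [CommRing R₂]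
    [AddCommGroup M₁] [AddCommGroup M₂] [Module R₁ M₁] [Module R₂ M₂] :
    Module (R₁ × R₂) (M₁ × M₂) where
  smul r m := (r.1 • m.1, r.2 • m.2)
  one_smul m := by ext <;> exact one_smul _ _
  mul_smul r s m := by ext <;> exact mul_smul _ _ _
  smul_zero r := by ext <;> exact smul_zero _
  smul_add r m n := by ext <;> exact smul_add _ _ _
  add_smul r s m := by ext <;> exact add_smul _ _ _
  zero_smul m := by ext <;> exact zero_smul _ _


private lemma aux_ker_quot {R M : Type*} [CommRing R] [AddCommGroup M] [Module R M]
    (A B C : Submodule R M) (P : Ideal R) (hB : B = P • ⊤) (hC : C = A ⊔ B)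
    (p : (M ⧸ A) →ₗ[R] (M ⧸ C))
    (hp : ∀ m : M, p (Submodule.Quotient.mk m) = Submodule.Quotient.mk m) :
    LinearMap.ker p = P • ⊤ := by
  have hcomp : p ∘ₗ A.mkQ = C.mkQ := LinearMap.ext fun m => hp m
  have hker : Submodule.comap A.mkQ (LinearMap.ker p) = C := by
    rw [← LinearMap.ker_comp, hcomp, Submodule.ker_mkQ]
  have hbotA : Submodule.map A.mkQ A = ⊥ := by
    rw [eq_bot_iff, Submodule.map_le_iff_le_comap]
    intro y hy
    simpa using (Submodule.Quotient.mk_eq_zero _).mpr hy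
  calc LinearMap.ker p
      = Submodule.map A.mkQ (Submodule.comap A.mkQ (LinearMap.ker p)) := by
        rw [Submodule.map_comap_eq, Submodule.range_mkQ, top_inf_eq]
    _ = P • ⊤ := by
        rw [hker, hC, Submodule.map_sup, hbotA, bot_sup_eq, hB, Submodule.map_smul'',
          Submodule.map_top, Submodule.range_mkQ]

/-- an `R`-submodule `S ⊆ T₁ × T₂` is isomorphic (via the canonical map) to the
pullback of the induced surjections `pᵢ : S/P_jS → S/(P₁S + P₂S)`, and `ker pᵢ = PᵢSᵢ`.
Hence every `R`-submodule of a direct sum `T₁ ⊕ T₂` is a separated module. -/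
theorem statement_6 {R₁ R₂ Rb : Type} [CommRing R₁] [CommRing R₂] [CommRing Rb]
    (v₁ : R₁ →+* Rb) (v₂ : R₂ →+* Rb)
    (hv₁ : Function.Surjective v₁) (hv₂ : Function.Surjective v₂)
    (T₁ T₂ : Type) [AddCommGroup T₁] [AddCommGroup T₂] [Module R₁ T₁] [Module R₂ T₂]
    (S : Submodule (PullbackRing v₁ v₂) (T₁ × T₂))
    (P₁ P₂ : Ideal (PullbackRing v₁ v₂))
    (hP₁ : P₁ = RingHom.ker ((RingHom.snd R₁ R₂).comp (PullbackRing v₁ v₂).subtype))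
    (hP₂ : P₂ = RingHom.ker ((RingHom.fst R₁ R₂).comp (PullbackRing v₁ v₂).subtype))
    -- `N₁`, `N₂` are `P₁S`, `P₂S` viewed inside `S`; `S₁ = S ⧸ N₂`, `S₂ = S ⧸ N₁`,
    -- `S̄ = S ⧸ (N₁ ⊔ N₂)`.
    (N₁ N₂ : Submodule (PullbackRing v₁ v₂) S)
    (hN₁ : N₁ = Submodule.comap S.subtype (P₁ • S))
    (hN₂ : N₂ = Submodule.comap S.subtype (P₂ • S))
    -- the induced maps `p₁ : S₁ → S̄`, `p₂ : S₂ → S̄`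
    (p₁ : (S ⧸ N₂) →ₗ[PullbackRing v₁ v₂] (S ⧸ (N₁ ⊔ N₂)))
    (p₂ : (S ⧸ N₁) →ₗ[PullbackRing v₁ v₂] (S ⧸ (N₁ ⊔ N₂)))
    (hp₁ : ∀ s : S, p₁ (Submodule.Quotient.mk s) = Submodule.Quotient.mk s)
    (hp₂ : ∀ s : S, p₂ (Submodule.Quotient.mk s) = Submodule.Quotient.mk s) :
    Function.Surjective p₁ ∧ Function.Surjective p₂ ∧
    Function.Injective (fun s : S =>
      ((Submodule.Quotient.mk s : S ⧸ N₂), (Submodule.Quotient.mk s : S ⧸ N₁))) ∧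
    Set.range (fun s : S =>
      ((Submodule.Quotient.mk s : S ⧸ N₂), (Submodule.Quotient.mk s : S ⧸ N₁)))
      = {x : (S ⧸ N₂) × (S ⧸ N₁) | p₁ x.1 = p₂ x.2} ∧
    LinearMap.ker p₁ = P₁ • (⊤ : Submodule (PullbackRing v₁ v₂) (S ⧸ N₂)) ∧
    LinearMap.ker p₂ = P₂ • (⊤ : Submodule (PullbackRing v₁ v₂) (S ⧸ N₁)) := by

  subst hP₁ hP₂ hN₁ hN₂
  -- elements of P₁ • S have zero second coordinate
  have hsnd : ∀ x ∈ (RingHom.ker ((RingHom.snd R₁ R₂).comp (PullbackRing v₁ v₂).subtype) • S :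
      Submodule (PullbackRing v₁ v₂) (T₁ × T₂)), x.2 = 0 := by
    intro x hx
    refine Submodule.smul_induction_on hx ?_ ?_
    · intro r hr n _
      have h2 : ((r : (PullbackRing v₁ v₂)) : R₁ × R₂).2 = 0 := hr
      show ((r : (PullbackRing v₁ v₂)) : R₁ × R₂).2 • n.2 = 0
      rw [h2, zero_smul]
    · intro x y hx hy
      show x.2 + y.2 = 0
      rw [hx, hy, add_zero]
  have hfst : ∀ x ∈ (RingHom.ker ((RingHom.fst R₁ R₂).comp (PullbackRing v₁ v₂).subtype) • S :
      Submodule (PullbackRing v₁ v₂) (T₁ × T₂)), x.1 = 0 := by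
    intro x hx
    refine Submodule.smul_induction_on hx ?_ ?_
    · intro r hr n _
      have h2 : ((r : (PullbackRing v₁ v₂)) : R₁ × R₂).1 = 0 := hr
      show ((r : (PullbackRing v₁ v₂)) : R₁ × R₂).1 • n.1 = 0
      rw [h2, zero_smul]
    · intro x y hx hy
      show x.1 + y.1 = 0
      rw [hx, hy, add_zero]
  have keyA : ∀ (P : Ideal (PullbackRing v₁ v₂)),
      Submodule.comap S.subtype (P • S) = P • (⊤ : Submodule (PullbackRing v₁ v₂) S) := by
    intro P
    have h1 : Submodule.map S.subtype (P • (⊤ : Submodule (PullbackRing v₁ v₂) S)) = P • S := by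
      rw [Submodule.map_smul'', Submodule.map_top, Submodule.range_subtype]
    rw [← h1, Submodule.comap_map_eq, Submodule.ker_subtype, sup_bot_eq]
  have surj₁ : Function.Surjective p₁ := by
    intro y
    obtain ⟨s, rfl⟩ := Submodule.Quotient.mk_surjective _ y
    exact ⟨Submodule.Quotient.mk s, hp₁ s⟩
  have surj₂ : Function.Surjective p₂ := by
    intro y
    obtain ⟨s, rfl⟩ := Submodule.Quotient.mk_surjective _ y
    exact ⟨Submodule.Quotient.mk s, hp₂ s⟩
  refine ⟨surj₁, surj₂, ?_, ?_, ?_, ?_⟩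
  · intro s t h
    have h1 : (Submodule.Quotient.mk s :
        S ⧸ Submodule.comap S.subtype
          (RingHom.ker ((RingHom.fst R₁ R₂).comp (PullbackRing v₁ v₂).subtype) • S))
        = Submodule.Quotient.mk t := congrArg Prod.fst h
    have h2 : (Submodule.Quotient.mk s :
        S ⧸ Submodule.comap S.subtype
          (RingHom.ker ((RingHom.snd R₁ R₂).comp (PullbackRing v₁ v₂).subtype) • S))
        = Submodule.Quotient.mk t := congrArg Prod.snd h
    have m1 := (Submodule.Quotient.eq _).mp h1
    have m2 := (Submodule.Quotient.eq _).mp h2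
    have e1 : ((s - t : S) : T₁ × T₂).1 = 0 := hfst _ m1
    have e2 : ((s - t : S) : T₁ × T₂).2 = 0 := hsnd _ m2
    have : ((s - t : S) : T₁ × T₂) = 0 := Prod.ext e1 e2
    have : (s - t : S) = 0 := Subtype.ext this
    exact sub_eq_zero.mp this
  · ext x
    constructor
    · rintro ⟨s, rfl⟩
      show p₁ (Submodule.Quotient.mk s) = p₂ (Submodule.Quotient.mk s)
      rw [hp₁, hp₂]
    · intro hx
      obtain ⟨a, ha⟩ := Submodule.Quotient.mk_surjective _ x.1
      obtain ⟨b, hb⟩ := Submodule.Quotient.mk_surjective _ x.2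
      have hab : (Submodule.Quotient.mk a : S ⧸ (Submodule.comap S.subtype
            (RingHom.ker ((RingHom.snd R₁ R₂).comp (PullbackRing v₁ v₂).subtype) • S) ⊔
          Submodule.comap S.subtype
            (RingHom.ker ((RingHom.fst R₁ R₂).comp (PullbackRing v₁ v₂).subtype) • S)))
          = Submodule.Quotient.mk b := by
        have := hx
        rw [Set.mem_setOf_eq, ← ha, ← hb, hp₁, hp₂] at this
        exact this
      have hmem := (Submodule.Quotient.eq _).mp hab
      obtain ⟨n₁, hn₁, n₂, hn₂, hsum⟩ := Submodule.mem_sup.mp hmem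
      refine ⟨a - n₂, ?_⟩
      have k1 : (Submodule.Quotient.mk (a - n₂) :
          S ⧸ Submodule.comap S.subtype
            (RingHom.ker ((RingHom.fst R₁ R₂).comp (PullbackRing v₁ v₂).subtype) • S)) = x.1 := by
        rw [← ha]
        exact (Submodule.Quotient.eq _).mpr (by simpa using Submodule.neg_mem _ hn₂)
      have k2 : (Submodule.Quotient.mk (a - n₂) :
          S ⧸ Submodule.comap S.subtype
            (RingHom.ker ((RingHom.snd R₁ R₂).comp (PullbackRing v₁ v₂).subtype) • S)) = x.2 := by
        rw [← hb]
        refine (Submodule.Quotient.eq _).mpr ?_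
        have : a - n₂ - b = n₁ := by
          have h' : a - n₂ - b = a - b - n₂ := by abel
          rw [h', ← hsum]; abel
        rw [this]; exact hn₁
      exact Prod.ext k1 k2
  · exact aux_ker_quot _ _ _ _
      (keyA (RingHom.ker ((RingHom.snd R₁ R₂).comp (PullbackRing v₁ v₂).subtype)))
      (sup_comm _ _) p₁ hp₁
  · exact aux_ker_quot _ _ _ _
      (keyA (RingHom.ker ((RingHom.fst R₁ R₂).comp (PullbackRing v₁ v₂).subtype)))
      rfl p₂ hp₂
end

section
/- Let f : S → T be an R-linear map between separated modules S ⊆ S₁ ⊕ S₂ and T ⊆ T₁ ⊕ T₂ given in separated presentations. Then there exist unique Rᵢ-linear maps fᵢ : Sᵢ → Tᵢ (i = 1,2) such that f(s₁,s₂) = (f₁(s₁), f₂(s₂)) for all (s₁,s₂) ∈ S; i.e., every homomorphism of separated modules is separated. -/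
set_option synthInstance.maxHeartbeats 1000000
set_option maxHeartbeats 1000000

/-- The pullback module of two (semi)linear maps `p₁ : S₁ →ₛₗ[v₁] Sb`, `p₂ : S₂ →ₛₗ[v₂] Sb`,
as a submodule of `S₁ × S₂` over the pullback ring. -/
def pbSubmodule {R₁ R₂ Rb : Type*} [CommRing R₁] [CommRing R₂] [CommRing Rb]
    {v₁ : R₁ →+* Rb} {v₂ : R₂ →+* Rb}
    {S₁ S₂ Sb : Type*} [AddCommGroup S₁] [AddCommGroup S₂] [AddCommGroup Sb]
    [Module R₁ S₁] [Module R₂ S₂] [Module Rb Sb]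
    (p₁ : S₁ →ₛₗ[v₁] Sb) (p₂ : S₂ →ₛₗ[v₂] Sb) :
    Submodule (PullbackRing v₁ v₂) (S₁ × S₂) where
  carrier := {s | p₁ s.1 = p₂ s.2}
  zero_mem' := by simp
  add_mem' := by intro a b ha hb; simpa [map_add] using congrArg₂ (· + ·) ha hb
  smul_mem' := by
    intro r s hs
    show p₁ ((r : R₁ × R₂).1 • s.1) = p₂ ((r : R₁ × R₂).2 • s.2)
    have hr : v₁ (r : R₁ × R₂).1 = v₂ (r : R₁ × R₂).2 := r.2
    rw [map_smulₛₗ, map_smulₛₗ, hs, hr]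

/-- The map between pullback modules induced by a compatible triple `(f₁, fb, f₂)`. -/
def inducedMap {R₁ R₂ Rb : Type*} [CommRing R₁] [CommRing R₂] [CommRing Rb]
    {v₁ : R₁ →+* Rb} {v₂ : R₂ →+* Rb}
    {M₁ M₂ Mb N₁ N₂ Nb : Type*}
    [AddCommGroup M₁] [AddCommGroup M₂] [AddCommGroup Mb]
    [AddCommGroup N₁] [AddCommGroup N₂] [AddCommGroup Nb]
    [Module R₁ M₁] [Module R₂ M₂] [Module Rb Mb]
    [Module R₁ N₁] [Module R₂ N₂] [Module Rb Nb]
    (p₁ : M₁ →ₛₗ[v₁] Mb) (p₂ : M₂ →ₛₗ[v₂] Mb)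
    (q₁ : N₁ →ₛₗ[v₁] Nb) (q₂ : N₂ →ₛₗ[v₂] Nb)
    (f₁ : M₁ →ₗ[R₁] N₁) (f₂ : M₂ →ₗ[R₂] N₂) (fb : Mb →ₗ[Rb] Nb)
    (h₁ : ∀ m₁, q₁ (f₁ m₁) = fb (p₁ m₁)) (h₂ : ∀ m₂, q₂ (f₂ m₂) = fb (p₂ m₂)) :
    pbSubmodule p₁ p₂ → pbSubmodule q₁ q₂ :=
  fun m => ⟨(f₁ (m : M₁ × M₂).1, f₂ (m : M₁ × M₂).2), by
    have hm : p₁ (m : M₁ × M₂).1 = p₂ (m : M₁ × M₂).2 := m.2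
    show q₁ _ = q₂ _
    rw [h₁, h₂, hm]⟩

/-- every `R`-linear map `f : S → T` between separated modules, given in
separated presentations `S ⊆ S₁ × S₂`, `T ⊆ T₁ × T₂`, is induced by a unique pair of
`Rᵢ`-linear component maps `fᵢ : Sᵢ → Tᵢ`: every homomorphism of separated modules is
separated. -/
theorem statement_8 {R₁ R₂ Rb : Type} [CommRing R₁] [CommRing R₂] [CommRing Rb]
    (v₁ : R₁ →+* Rb) (v₂ : R₂ →+* Rb)
    (hv₁ : Function.Surjective v₁) (hv₂ : Function.Surjective v₂)
    (S₁ S₂ Sb T₁ T₂ Tb : Type)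
    [AddCommGroup S₁] [AddCommGroup S₂] [AddCommGroup Sb]
    [AddCommGroup T₁] [AddCommGroup T₂] [AddCommGroup Tb]
    [Module R₁ S₁] [Module R₂ S₂] [Module Rb Sb]
    [Module R₁ T₁] [Module R₂ T₂] [Module Rb Tb]
    (p₁ : S₁ →ₛₗ[v₁] Sb) (p₂ : S₂ →ₛₗ[v₂] Sb)
    (q₁ : T₁ →ₛₗ[v₁] Tb) (q₂ : T₂ →ₛₗ[v₂] Tb)
    -- the diagrams are separated:
    (hp₁ : Function.Surjective p₁) (hp₂ : Function.Surjective p₂)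
    (hq₁ : Function.Surjective q₁) (hq₂ : Function.Surjective q₂)
    (hkp₁ : LinearMap.ker p₁ = RingHom.ker v₁ • (⊤ : Submodule R₁ S₁))
    (hkp₂ : LinearMap.ker p₂ = RingHom.ker v₂ • (⊤ : Submodule R₂ S₂))
    (hkq₁ : LinearMap.ker q₁ = RingHom.ker v₁ • (⊤ : Submodule R₁ T₁))
    (hkq₂ : LinearMap.ker q₂ = RingHom.ker v₂ • (⊤ : Submodule R₂ T₂))
    (f : pbSubmodule p₁ p₂ →ₗ[PullbackRing v₁ v₂] pbSubmodule q₁ q₂) :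
    ∃! fp : (S₁ →ₗ[R₁] T₁) × (S₂ →ₗ[R₂] T₂),
      ∀ s : pbSubmodule p₁ p₂,
        ((f s : T₁ × T₂)) = (fp.1 (s : S₁ × S₂).1, fp.2 (s : S₁ × S₂).2) := by

  classical
  -- coercion of smul on the pullback submodules
  have hsmulS : ∀ (r : PullbackRing v₁ v₂) (x : pbSubmodule p₁ p₂),
      ((r • x : pbSubmodule p₁ p₂) : S₁ × S₂)
        = ((r : R₁ × R₂).1 • (x : S₁ × S₂).1, (r : R₁ × R₂).2 • (x : S₁ × S₂).2) :=
    fun r x => rfl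
  have hsmulT : ∀ (r : PullbackRing v₁ v₂) (x : pbSubmodule q₁ q₂),
      ((r • x : pbSubmodule q₁ q₂) : T₁ × T₂)
        = ((r : R₁ × R₂).1 • (x : T₁ × T₂).1, (r : R₁ × R₂).2 • (x : T₁ × T₂).2) :=
    fun r x => rfl
  -- key: elements of the form (0, t) with t ∈ ker p₂ are killed in the first component
  have key₂ : ∀ t ∈ (RingHom.ker v₂ • (⊤ : Submodule R₂ S₂)),
      ∃ h : ((0 : S₁), t) ∈ pbSubmodule p₁ p₂,
        ((f ⟨((0 : S₁), t), h⟩ : T₁ × T₂)).1 = 0 := by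
    intro t ht
    refine Submodule.smul_induction_on ht ?_ ?_
    · intro r hr s _
      obtain ⟨u, hu⟩ := hp₁ (p₂ s)
      have hm : (u, s) ∈ pbSubmodule p₁ p₂ := hu
      have hrr : ((0 : R₁), r) ∈ PullbackRing v₁ v₂ := by
        show v₁ 0 = v₂ r
        rw [map_zero]; exact (RingHom.mem_ker.mp hr).symm
      set rr : PullbackRing v₁ v₂ := ⟨((0 : R₁), r), hrr⟩ with hrrdef
      have hco : ((rr • (⟨(u, s), hm⟩ : pbSubmodule p₁ p₂) : pbSubmodule p₁ p₂) : S₁ × S₂)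
          = ((0 : S₁), r • s) := by
        rw [hsmulS]; simp [hrrdef]
      have hmem : ((0 : S₁), r • s) ∈ pbSubmodule p₁ p₂ := by
        rw [← hco]; exact (rr • (⟨(u, s), hm⟩ : pbSubmodule p₁ p₂)).2
      refine ⟨hmem, ?_⟩
      have heq : (⟨((0 : S₁), r • s), hmem⟩ : pbSubmodule p₁ p₂)
          = rr • (⟨(u, s), hm⟩ : pbSubmodule p₁ p₂) := Subtype.ext hco.symm
      rw [heq, map_smul, hsmulT]
      simp [hrrdef]
    · intro x y hx hy
      obtain ⟨hx1, hx2⟩ := hx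
      obtain ⟨hy1, hy2⟩ := hy
      have hmem : ((0 : S₁), x + y) ∈ pbSubmodule p₁ p₂ := by
        have := (pbSubmodule p₁ p₂).add_mem hx1 hy1
        simpa using this
      refine ⟨hmem, ?_⟩
      have heq : (⟨((0 : S₁), x + y), hmem⟩ : pbSubmodule p₁ p₂)
          = ⟨((0 : S₁), x), hx1⟩ + ⟨((0 : S₁), y), hy1⟩ := by
        apply Subtype.ext
        show ((0 : S₁), x + y) = ((0 : S₁), x) + ((0 : S₁), y)
        simp
      rw [heq, map_add]
      show ((f _ : T₁ × T₂) + (f _ : T₁ × T₂)).1 = 0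
      simp [hx2, hy2]
  -- symmetric key for the second component
  have key₁ : ∀ t ∈ (RingHom.ker v₁ • (⊤ : Submodule R₁ S₁)),
      ∃ h : (t, (0 : S₂)) ∈ pbSubmodule p₁ p₂,
        ((f ⟨(t, (0 : S₂)), h⟩ : T₁ × T₂)).2 = 0 := by
    intro t ht
    refine Submodule.smul_induction_on ht ?_ ?_
    · intro r hr s _
      obtain ⟨u, hu⟩ := hp₂ (p₁ s)
      have hm : (s, u) ∈ pbSubmodule p₁ p₂ := hu.symm
      have hrr : (r, (0 : R₂)) ∈ PullbackRing v₁ v₂ := by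
        show v₁ r = v₂ 0
        rw [map_zero]; exact RingHom.mem_ker.mp hr
      set rr : PullbackRing v₁ v₂ := ⟨(r, (0 : R₂)), hrr⟩ with hrrdef
      have hco : ((rr • (⟨(s, u), hm⟩ : pbSubmodule p₁ p₂) : pbSubmodule p₁ p₂) : S₁ × S₂)
          = (r • s, (0 : S₂)) := by
        rw [hsmulS]; simp [hrrdef]
      have hmem : (r • s, (0 : S₂)) ∈ pbSubmodule p₁ p₂ := by
        rw [← hco]; exact (rr • (⟨(s, u), hm⟩ : pbSubmodule p₁ p₂)).2
      refine ⟨hmem, ?_⟩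
      have heq : (⟨(r • s, (0 : S₂)), hmem⟩ : pbSubmodule p₁ p₂)
          = rr • (⟨(s, u), hm⟩ : pbSubmodule p₁ p₂) := Subtype.ext hco.symm
      rw [heq, map_smul, hsmulT]
      simp [hrrdef]
    · intro x y hx hy
      obtain ⟨hx1, hx2⟩ := hx
      obtain ⟨hy1, hy2⟩ := hy
      have hmem : (x + y, (0 : S₂)) ∈ pbSubmodule p₁ p₂ := by
        have := (pbSubmodule p₁ p₂).add_mem hx1 hy1
        simpa using this
      refine ⟨hmem, ?_⟩
      have heq : (⟨(x + y, (0 : S₂)), hmem⟩ : pbSubmodule p₁ p₂)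
          = ⟨(x, (0 : S₂)), hx1⟩ + ⟨(y, (0 : S₂)), hy1⟩ := by
        apply Subtype.ext
        show (x + y, (0 : S₂)) = (x, (0 : S₂)) + (y, (0 : S₂))
        simp
      rw [heq, map_add]
      show ((f _ : T₁ × T₂) + (f _ : T₁ × T₂)).2 = 0
      simp [hx2, hy2]
  -- invariance: the first component of f m depends only on the first component of m
  have inv₁ : ∀ m m' : pbSubmodule p₁ p₂,
      (m : S₁ × S₂).1 = (m' : S₁ × S₂).1 → ((f m : T₁ × T₂)).1 = ((f m' : T₁ × T₂)).1 := by
    intro m m' hmm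
    set d := m - m' with hd
    have hd1 : (d : S₁ × S₂).1 = 0 := by
      have : (d : S₁ × S₂) = (m : S₁ × S₂) - (m' : S₁ × S₂) := rfl
      rw [this]; show (m : S₁ × S₂).1 - (m' : S₁ × S₂).1 = 0
      rw [hmm, sub_self]
    have hker : (d : S₁ × S₂).2 ∈ (RingHom.ker v₂ • (⊤ : Submodule R₂ S₂)) := by
      rw [← hkp₂]
      have hdm : p₁ (d : S₁ × S₂).1 = p₂ (d : S₁ × S₂).2 := d.2
      rw [hd1] at hdm
      simpa [LinearMap.mem_ker] using hdm.symm
    obtain ⟨h0, hz⟩ := key₂ _ hker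
    have hde : d = ⟨((0 : S₁), (d : S₁ × S₂).2), h0⟩ := by
      apply Subtype.ext
      exact Prod.ext hd1 rfl
    have : ((f d : T₁ × T₂)).1 = 0 := by rw [hde]; exact hz
    rw [hd, map_sub] at this
    have : ((f m : T₁ × T₂)).1 - ((f m' : T₁ × T₂)).1 = 0 := this
    exact sub_eq_zero.mp this
  have inv₂ : ∀ m m' : pbSubmodule p₁ p₂,
      (m : S₁ × S₂).2 = (m' : S₁ × S₂).2 → ((f m : T₁ × T₂)).2 = ((f m' : T₁ × T₂)).2 := by
    intro m m' hmm
    set d := m - m' with hd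
    have hd2 : (d : S₁ × S₂).2 = 0 := by
      have : (d : S₁ × S₂) = (m : S₁ × S₂) - (m' : S₁ × S₂) := rfl
      rw [this]; show (m : S₁ × S₂).2 - (m' : S₁ × S₂).2 = 0
      rw [hmm, sub_self]
    have hker : (d : S₁ × S₂).1 ∈ (RingHom.ker v₁ • (⊤ : Submodule R₁ S₁)) := by
      rw [← hkp₁]
      have hdm : p₁ (d : S₁ × S₂).1 = p₂ (d : S₁ × S₂).2 := d.2
      rw [hd2] at hdm
      simpa [LinearMap.mem_ker] using hdm
    obtain ⟨h0, hz⟩ := key₁ _ hker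
    have hde : d = ⟨((d : S₁ × S₂).1, (0 : S₂)), h0⟩ := by
      apply Subtype.ext
      exact Prod.ext rfl hd2
    have : ((f d : T₁ × T₂)).2 = 0 := by rw [hde]; exact hz
    rw [hd, map_sub] at this
    have : ((f m : T₁ × T₂)).2 - ((f m' : T₁ × T₂)).2 = 0 := this
    exact sub_eq_zero.mp this
  -- lifts
  have lift₁ : ∀ s₁ : S₁, ∃ s₂ : S₂, (s₁, s₂) ∈ pbSubmodule p₁ p₂ := by
    intro s₁
    obtain ⟨s₂, hs₂⟩ := hp₂ (p₁ s₁)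
    exact ⟨s₂, hs₂.symm⟩
  have lift₂ : ∀ s₂ : S₂, ∃ s₁ : S₁, (s₁, s₂) ∈ pbSubmodule p₁ p₂ := by
    intro s₂
    obtain ⟨s₁, hs₁⟩ := hp₁ (p₂ s₂)
    exact ⟨s₁, hs₁⟩
  let mk₁ : S₁ → pbSubmodule p₁ p₂ := fun s₁ =>
    ⟨(s₁, Classical.choose (lift₁ s₁)), Classical.choose_spec (lift₁ s₁)⟩
  let mk₂ : S₂ → pbSubmodule p₁ p₂ := fun s₂ =>
    ⟨(Classical.choose (lift₂ s₂), s₂), Classical.choose_spec (lift₂ s₂)⟩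
  have hmk₁ : ∀ s₁, ((mk₁ s₁ : pbSubmodule p₁ p₂) : S₁ × S₂).1 = s₁ := fun _ => rfl
  have hmk₂ : ∀ s₂, ((mk₂ s₂ : pbSubmodule p₁ p₂) : S₁ × S₂).2 = s₂ := fun _ => rfl
  -- the component maps
  let F₁ : S₁ →ₗ[R₁] T₁ :=
    { toFun := fun s₁ => ((f (mk₁ s₁) : T₁ × T₂)).1
      map_add' := by
        intro a b
        have h1 : ((f (mk₁ (a + b)) : T₁ × T₂)).1 = ((f (mk₁ a + mk₁ b) : T₁ × T₂)).1 :=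
          inv₁ _ _ rfl
        rw [h1, map_add]
        rfl
      map_smul' := by
        intro r a
        dsimp only [RingHom.id_apply]
        obtain ⟨r₂, hr₂⟩ := hv₂ (v₁ r)
        have hrr : (r, r₂) ∈ PullbackRing v₁ v₂ := hr₂.symm
        set rr : PullbackRing v₁ v₂ := ⟨(r, r₂), hrr⟩ with hrrdef
        have h1 : ((f (mk₁ (r • a)) : T₁ × T₂)).1 = ((f (rr • mk₁ a) : T₁ × T₂)).1 := by
          apply inv₁
          rw [hsmulS]
        rw [h1, map_smul, hsmulT] }
  let F₂ : S₂ →ₗ[R₂] T₂ :=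
    { toFun := fun s₂ => ((f (mk₂ s₂) : T₁ × T₂)).2
      map_add' := by
        intro a b
        have h1 : ((f (mk₂ (a + b)) : T₁ × T₂)).2 = ((f (mk₂ a + mk₂ b) : T₁ × T₂)).2 :=
          inv₂ _ _ rfl
        rw [h1, map_add]
        rfl
      map_smul' := by
        intro r a
        dsimp only [RingHom.id_apply]
        obtain ⟨r₁, hr₁⟩ := hv₁ (v₂ r)
        have hrr : (r₁, r) ∈ PullbackRing v₁ v₂ := hr₁
        set rr : PullbackRing v₁ v₂ := ⟨(r₁, r), hrr⟩ with hrrdef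
        have h1 : ((f (mk₂ (r • a)) : T₁ × T₂)).2 = ((f (rr • mk₂ a) : T₁ × T₂)).2 := by
          apply inv₂
          rw [hsmulS]
        rw [h1, map_smul, hsmulT] }
  refine ⟨(F₁, F₂), ?_, ?_⟩
  · intro s
    have h1 : ((f s : T₁ × T₂)).1 = F₁ (s : S₁ × S₂).1 := inv₁ s (mk₁ (s : S₁ × S₂).1) rfl
    have h2 : ((f s : T₁ × T₂)).2 = F₂ (s : S₁ × S₂).2 := inv₂ s (mk₂ (s : S₁ × S₂).2) rfl
    exact Prod.ext h1 h2
  · intro gp hgp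
    have hg1 : gp.1 = F₁ := by
      apply LinearMap.ext
      intro s₁
      have := hgp (mk₁ s₁)
      have h1 : gp.1 s₁ = ((f (mk₁ s₁) : T₁ × T₂)).1 := by
        rw [this]
      exact h1
    have hg2 : gp.2 = F₂ := by
      apply LinearMap.ext
      intro s₂
      have := hgp (mk₂ s₂)
      have h2 : gp.2 s₂ = ((f (mk₂ s₂) : T₁ × T₂)).2 := by
        rw [this]
      exact h2
    exact Prod.ext hg1 hg2
end

section
/- If f : S → T is a homomorphism of separated modules induced by component maps f₁ : S₁ → T₁ and f₂ : S₂ → T₂, then f₁ and f₂ induce the same map S̄ → T̄ on the quotients S̄ = Sᵢ/PᵢSᵢ, T̄ = Tᵢ/PᵢTᵢ. -/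
set_option synthInstance.maxHeartbeats 1000000
set_option maxHeartbeats 1000000

/-- if `f : S → T` between separated modules is induced by component maps
`f₁ : S₁ → T₁` and `f₂ : S₂ → T₂`, then `f₁` and `f₂` induce the same map `S̄ → T̄` on
the quotients, i.e. there is a single map `fb : Sb → Tb` with `fb ∘ p₁ = q₁ ∘ f₁` and
`fb ∘ p₂ = q₂ ∘ f₂`. -/
theorem statement_9 {R₁ R₂ Rb : Type} [CommRing R₁] [CommRing R₂] [CommRing Rb]
    (v₁ : R₁ →+* Rb) (v₂ : R₂ →+* Rb)
    (hv₁ : Function.Surjective v₁) (hv₂ : Function.Surjective v₂)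
    (S₁ S₂ Sb T₁ T₂ Tb : Type)
    [AddCommGroup S₁] [AddCommGroup S₂] [AddCommGroup Sb]
    [AddCommGroup T₁] [AddCommGroup T₂] [AddCommGroup Tb]
    [Module R₁ S₁] [Module R₂ S₂] [Module Rb Sb]
    [Module R₁ T₁] [Module R₂ T₂] [Module Rb Tb]
    (p₁ : S₁ →ₛₗ[v₁] Sb) (p₂ : S₂ →ₛₗ[v₂] Sb)
    (q₁ : T₁ →ₛₗ[v₁] Tb) (q₂ : T₂ →ₛₗ[v₂] Tb)
    (hp₁ : Function.Surjective p₁) (hp₂ : Function.Surjective p₂)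
    (hq₁ : Function.Surjective q₁) (hq₂ : Function.Surjective q₂)
    (hkp₁ : LinearMap.ker p₁ = RingHom.ker v₁ • (⊤ : Submodule R₁ S₁))
    (hkp₂ : LinearMap.ker p₂ = RingHom.ker v₂ • (⊤ : Submodule R₂ S₂))
    (hkq₁ : LinearMap.ker q₁ = RingHom.ker v₁ • (⊤ : Submodule R₁ T₁))
    (hkq₂ : LinearMap.ker q₂ = RingHom.ker v₂ • (⊤ : Submodule R₂ T₂))
    (f : pbSubmodule p₁ p₂ →ₗ[PullbackRing v₁ v₂] pbSubmodule q₁ q₂)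
    (f₁ : S₁ →ₗ[R₁] T₁) (f₂ : S₂ →ₗ[R₂] T₂)
    (hf : ∀ s : pbSubmodule p₁ p₂,
      ((f s : T₁ × T₂)) = (f₁ (s : S₁ × S₂).1, f₂ (s : S₁ × S₂).2)) :
    ∃ fb : Sb →+ Tb,
      (∀ s₁ : S₁, fb (p₁ s₁) = q₁ (f₁ s₁)) ∧ (∀ s₂ : S₂, fb (p₂ s₂) = q₂ (f₂ s₂)) := by
  -- key: elements of ker p₁ map to ker q₁ under f₁
  have key : ∀ x : S₁, p₁ x = 0 → q₁ (f₁ x) = 0 := by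
    intro x hx
    have hx' : x ∈ RingHom.ker v₁ • (⊤ : Submodule R₁ S₁) := by
      rw [← hkp₁]; exact hx
    refine Submodule.smul_induction_on hx' ?_ ?_
    · intro r hr m _
      rw [map_smul, map_smulₛₗ, show v₁ r = 0 from hr, zero_smul]
    · intro a b ha hb
      rw [map_add, map_add, ha, hb, add_zero]
  have key2 : ∀ x y : S₁, p₁ x = p₁ y → q₁ (f₁ x) = q₁ (f₁ y) := by
    intro x y h
    have h0 : q₁ (f₁ (x - y)) = 0 := key _ (by rw [map_sub, h, sub_self])
    rw [map_sub, map_sub] at h0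
    exact sub_eq_zero.mp h0
  -- choose preimages
  choose g hg using hp₁
  refine ⟨{ toFun := fun b => q₁ (f₁ (g b))
            map_zero' := key _ (by rw [hg]),
            map_add' := by
              intro a b
              have : q₁ (f₁ (g (a + b))) = q₁ (f₁ (g a + g b)) :=
                key2 _ _ (by rw [map_add, hg, hg, hg])
              show q₁ (f₁ (g (a+b))) = q₁ (f₁ (g a)) + q₁ (f₁ (g b))
              rw [this, map_add, map_add] },
          ?_, ?_⟩
  · intro s₁
    exact key2 _ _ (hg _)
  · intro s₂
    -- choose s₁ with p₁ s₁ = p₂ s₂; then (s₁, s₂) is in the pullback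
    set s₁ := g (p₂ s₂) with hs₁
    have hmem : ((s₁, s₂) : S₁ × S₂) ∈ pbSubmodule p₁ p₂ := hg (p₂ s₂)
    have hcomp : q₁ (f₁ s₁) = q₂ (f₂ s₂) := by
      have hm := (f ⟨(s₁, s₂), hmem⟩).2
      rw [hf ⟨(s₁, s₂), hmem⟩] at hm
      exact hm
    simpa using hcomp
end

section
/- Every separated R-module S has a unique separated diagram: if (S₁ → S̄ ← S₂) and (T₁ → T̄' ← T₂) are both separated diagrams whose pullbacks are isomorphic to S (compatibly), then there are isomorphisms Sᵢ ≅ Tᵢ of Rᵢ-modules and S̄ ≅ T̄' commuting with the structure maps. -/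
set_option synthInstance.maxHeartbeats 1000000
set_option maxHeartbeats 1000000

section Aux
variable {R₁ R₂ Rb : Type} [CommRing R₁] [CommRing R₂] [CommRing Rb]
    {v₁ : R₁ →+* Rb} {v₂ : R₂ →+* Rb}
    {S₁ S₂ Sb T₁ T₂ Tb : Type}
    [AddCommGroup S₁] [AddCommGroup S₂] [AddCommGroup Sb]
    [AddCommGroup T₁] [AddCommGroup T₂] [AddCommGroup Tb]
    [Module R₁ S₁] [Module R₂ S₂] [Module Rb Sb]
    [Module R₁ T₁] [Module R₂ T₂] [Module Rb Tb]
    {p₁ : S₁ →ₛₗ[v₁] Sb} {p₂ : S₂ →ₛₗ[v₂] Sb}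
    {q₁ : T₁ →ₛₗ[v₁] Tb} {q₂ : T₂ →ₛₗ[v₂] Tb}

lemma smul_val (r : PullbackRing v₁ v₂) (m : S₁ × S₂) :
    r • m = ((r : R₁ × R₂).1 • m.1, (r : R₁ × R₂).2 • m.2) := rfl

lemma pb_mem (s : pbSubmodule p₁ p₂) : p₁ (s : S₁ × S₂).1 = p₂ (s : S₁ × S₂).2 := s.2



lemma zero1 (hp₁ : Function.Surjective p₁)
    (hkp₂ : LinearMap.ker p₂ = RingHom.ker v₂ • (⊤ : Submodule R₂ S₂))
    (f : pbSubmodule p₁ p₂ →ₗ[PullbackRing v₁ v₂] pbSubmodule q₁ q₂)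
    (s : pbSubmodule p₁ p₂) (hs : (s : S₁ × S₂).1 = 0) :
    ((f s : T₁ × T₂)).1 = 0 := by
  have hmem : (s : S₁ × S₂).2 ∈ RingHom.ker v₂ • (⊤ : Submodule R₂ S₂) := by
    rw [← hkp₂, LinearMap.mem_ker, ← pb_mem s, hs, map_zero]
  have main : ∀ x ∈ RingHom.ker v₂ • (⊤ : Submodule R₂ S₂),
      ∃ (h : ((0:S₁), x) ∈ pbSubmodule p₁ p₂),
        ((f ⟨((0:S₁), x), h⟩ : T₁ × T₂)).1 = 0 := by
    intro x hx
    refine Submodule.smul_induction_on hx ?_ ?_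
    · intro r hr t _
      obtain ⟨u, hu⟩ := hp₁ (p₂ t)
      have hy : (u, t) ∈ pbSubmodule p₁ p₂ := hu
      have hr0 : v₂ r = 0 := RingHom.mem_ker.mp hr
      set rr : PullbackRing v₁ v₂ := ⟨((0:R₁), r), by show v₁ 0 = v₂ r; simp [hr0]⟩ with hrr
      have hmem' : ((0:S₁), r • t) ∈ pbSubmodule p₁ p₂ := by
        show p₁ 0 = p₂ (r • t)
        rw [map_zero, map_smulₛₗ, hr0, zero_smul]
      refine ⟨hmem', ?_⟩
      have heq : (⟨((0:S₁), r • t), hmem'⟩ : pbSubmodule p₁ p₂) = rr • ⟨(u, t), hy⟩ := by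
        apply Subtype.ext
        show ((0:S₁), r • t) = rr • (u, t)
        rw [smul_val]
        simp [hrr]
      rw [heq, map_smul]
      show (rr • ((f ⟨(u, t), hy⟩ : pbSubmodule q₁ q₂) : T₁ × T₂)).1 = 0
      rw [smul_val]
      simp [hrr]
    · rintro x y ⟨hx, hfx⟩ ⟨hy, hfy⟩
      have hx' : p₁ (0:S₁) = p₂ x := hx
      have hy' : p₁ (0:S₁) = p₂ y := hy
      have hxy : ((0:S₁), x + y) ∈ pbSubmodule p₁ p₂ := by
        show p₁ 0 = p₂ (x + y)
        rw [map_add, ← hx', ← hy', map_zero, add_zero]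
      refine ⟨hxy, ?_⟩
      have heq : (⟨((0:S₁), x + y), hxy⟩ : pbSubmodule p₁ p₂)
          = ⟨((0:S₁), x), hx⟩ + ⟨((0:S₁), y), hy⟩ := by
        apply Subtype.ext; show ((0:S₁), x + y) = ((0:S₁), x) + ((0:S₁), y); simp
      rw [heq, map_add]
      show (((f _ : T₁ × T₂)) + ((f _ : T₁ × T₂))).1 = 0
      rw [Prod.fst_add, hfx, hfy, add_zero]
  obtain ⟨h, hc⟩ := main _ hmem
  have : s = ⟨((0:S₁), (s : S₁ × S₂).2), h⟩ := by
    apply Subtype.ext; exact Prod.ext hs rfl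
  rw [this]; exact hc

lemma zero2 (hp₂ : Function.Surjective p₂)
    (hkp₁ : LinearMap.ker p₁ = RingHom.ker v₁ • (⊤ : Submodule R₁ S₁))
    (f : pbSubmodule p₁ p₂ →ₗ[PullbackRing v₁ v₂] pbSubmodule q₁ q₂)
    (s : pbSubmodule p₁ p₂) (hs : (s : S₁ × S₂).2 = 0) :
    ((f s : T₁ × T₂)).2 = 0 := by
  have hmem : (s : S₁ × S₂).1 ∈ RingHom.ker v₁ • (⊤ : Submodule R₁ S₁) := by
    rw [← hkp₁, LinearMap.mem_ker, pb_mem s, hs, map_zero]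
  have main : ∀ x ∈ RingHom.ker v₁ • (⊤ : Submodule R₁ S₁),
      ∃ (h : (x, (0:S₂)) ∈ pbSubmodule p₁ p₂),
        ((f ⟨(x, (0:S₂)), h⟩ : T₁ × T₂)).2 = 0 := by
    intro x hx
    refine Submodule.smul_induction_on hx ?_ ?_
    · intro r hr t _
      obtain ⟨u, hu⟩ := hp₂ (p₁ t)
      have hy : (t, u) ∈ pbSubmodule p₁ p₂ := hu.symm
      have hr0 : v₁ r = 0 := RingHom.mem_ker.mp hr
      set rr : PullbackRing v₁ v₂ := ⟨(r, (0:R₂)), by show v₁ r = v₂ 0; simp [hr0]⟩ with hrr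
      have hmem' : (r • t, (0:S₂)) ∈ pbSubmodule p₁ p₂ := by
        show p₁ (r • t) = p₂ 0
        rw [map_zero, map_smulₛₗ, hr0, zero_smul]
      refine ⟨hmem', ?_⟩
      have heq : (⟨(r • t, (0:S₂)), hmem'⟩ : pbSubmodule p₁ p₂) = rr • ⟨(t, u), hy⟩ := by
        apply Subtype.ext
        show (r • t, (0:S₂)) = rr • (t, u)
        rw [smul_val]
        simp [hrr]
      rw [heq, map_smul]
      show (rr • ((f ⟨(t, u), hy⟩ : pbSubmodule q₁ q₂) : T₁ × T₂)).2 = 0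
      rw [smul_val]
      simp [hrr]
    · rintro x y ⟨hx, hfx⟩ ⟨hy, hfy⟩
      have hx' : p₁ x = p₂ (0:S₂) := hx
      have hy' : p₁ y = p₂ (0:S₂) := hy
      have hxy : (x + y, (0:S₂)) ∈ pbSubmodule p₁ p₂ := by
        show p₁ (x + y) = p₂ 0
        rw [map_add, hx', hy', map_zero, add_zero]
      refine ⟨hxy, ?_⟩
      have heq : (⟨(x + y, (0:S₂)), hxy⟩ : pbSubmodule p₁ p₂)
          = ⟨(x, (0:S₂)), hx⟩ + ⟨(y, (0:S₂)), hy⟩ := by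
        apply Subtype.ext; show (x + y, (0:S₂)) = (x, (0:S₂)) + (y, (0:S₂)); simp
      rw [heq, map_add]
      show (((f _ : T₁ × T₂)) + ((f _ : T₁ × T₂))).2 = 0
      rw [Prod.snd_add, hfx, hfy, add_zero]
  obtain ⟨h, hc⟩ := main _ hmem
  have : s = ⟨((s : S₁ × S₂).1, (0:S₂)), h⟩ := by
    apply Subtype.ext; exact Prod.ext rfl hs
  rw [this]; exact hc


/-- canonical lift of an element of `S₁` to the pullback module -/
noncomputable def lift1 (hp₂ : Function.Surjective p₂) (a : S₁) : pbSubmodule p₁ p₂ :=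
  ⟨(a, (hp₂ (p₁ a)).choose), ((hp₂ (p₁ a)).choose_spec).symm⟩

noncomputable def lift2 (hp₁ : Function.Surjective p₁) (a : S₂) : pbSubmodule p₁ p₂ :=
  ⟨((hp₁ (p₂ a)).choose, a), (hp₁ (p₂ a)).choose_spec⟩

noncomputable def e1f (hp₂ : Function.Surjective p₂)
    (f : pbSubmodule p₁ p₂ →ₗ[PullbackRing v₁ v₂] pbSubmodule q₁ q₂) (a : S₁) : T₁ :=
  ((f (lift1 hp₂ a) : T₁ × T₂)).1

noncomputable def e2f (hp₁ : Function.Surjective p₁)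
    (f : pbSubmodule p₁ p₂ →ₗ[PullbackRing v₁ v₂] pbSubmodule q₁ q₂) (a : S₂) : T₂ :=
  ((f (lift2 hp₁ a) : T₁ × T₂)).2

lemma key1 (hp₁ : Function.Surjective p₁) (hp₂ : Function.Surjective p₂)
    (hkp₂ : LinearMap.ker p₂ = RingHom.ker v₂ • (⊤ : Submodule R₂ S₂))
    (f : pbSubmodule p₁ p₂ →ₗ[PullbackRing v₁ v₂] pbSubmodule q₁ q₂)
    (s : pbSubmodule p₁ p₂) :
    ((f s : T₁ × T₂)).1 = e1f hp₂ f (s : S₁ × S₂).1 := by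
  have hz := zero1 hp₁ hkp₂ f (s - lift1 hp₂ (s : S₁ × S₂).1) (by
    have h0 : ((s - lift1 hp₂ (s : S₁ × S₂).1 : pbSubmodule p₁ p₂) : S₁ × S₂)
        = (s : S₁ × S₂) - ((lift1 hp₂ (s : S₁ × S₂).1 : pbSubmodule p₁ p₂) : S₁ × S₂) := rfl
    rw [h0, Prod.fst_sub]
    exact sub_self _)
  rw [map_sub] at hz
  have h2 : (((f s : pbSubmodule q₁ q₂) : T₁ × T₂)
      - ((f (lift1 hp₂ (s : S₁ × S₂).1) : pbSubmodule q₁ q₂) : T₁ × T₂)).1 = 0 := hz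
  rw [Prod.fst_sub, sub_eq_zero] at h2
  exact h2

lemma key2 (hp₁ : Function.Surjective p₁) (hp₂ : Function.Surjective p₂)
    (hkp₁ : LinearMap.ker p₁ = RingHom.ker v₁ • (⊤ : Submodule R₁ S₁))
    (f : pbSubmodule p₁ p₂ →ₗ[PullbackRing v₁ v₂] pbSubmodule q₁ q₂)
    (s : pbSubmodule p₁ p₂) :
    ((f s : T₁ × T₂)).2 = e2f hp₁ f (s : S₁ × S₂).2 := by
  have hz := zero2 hp₂ hkp₁ f (s - lift2 hp₁ (s : S₁ × S₂).2) (by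
    have h0 : ((s - lift2 hp₁ (s : S₁ × S₂).2 : pbSubmodule p₁ p₂) : S₁ × S₂)
        = (s : S₁ × S₂) - ((lift2 hp₁ (s : S₁ × S₂).2 : pbSubmodule p₁ p₂) : S₁ × S₂) := rfl
    rw [h0, Prod.snd_sub]
    exact sub_self _)
  rw [map_sub] at hz
  have h2 : (((f s : pbSubmodule q₁ q₂) : T₁ × T₂)
      - ((f (lift2 hp₁ (s : S₁ × S₂).2) : pbSubmodule q₁ q₂) : T₁ × T₂)).2 = 0 := hz
  rw [Prod.snd_sub, sub_eq_zero] at h2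
  exact h2

lemma e1f_add (hp₁ : Function.Surjective p₁) (hp₂ : Function.Surjective p₂)
    (hkp₂ : LinearMap.ker p₂ = RingHom.ker v₂ • (⊤ : Submodule R₂ S₂))
    (f : pbSubmodule p₁ p₂ →ₗ[PullbackRing v₁ v₂] pbSubmodule q₁ q₂) (a b : S₁) :
    e1f hp₂ f (a + b) = e1f hp₂ f a + e1f hp₂ f b := by
  have h := key1 hp₁ hp₂ hkp₂ f (lift1 hp₂ a + lift1 hp₂ b)
  have h1 : ((lift1 hp₂ a + lift1 hp₂ b : pbSubmodule p₁ p₂) : S₁ × S₂).1 = a + b := rfl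
  rw [map_add, h1] at h
  have h2 : ((f (lift1 hp₂ a) + f (lift1 hp₂ b) : pbSubmodule q₁ q₂) : T₁ × T₂).1
      = e1f hp₂ f a + e1f hp₂ f b := rfl
  rw [h2] at h
  exact h.symm

lemma e2f_add (hp₁ : Function.Surjective p₁) (hp₂ : Function.Surjective p₂)
    (hkp₁ : LinearMap.ker p₁ = RingHom.ker v₁ • (⊤ : Submodule R₁ S₁))
    (f : pbSubmodule p₁ p₂ →ₗ[PullbackRing v₁ v₂] pbSubmodule q₁ q₂) (a b : S₂) :
    e2f hp₁ f (a + b) = e2f hp₁ f a + e2f hp₁ f b := by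
  have h := key2 hp₁ hp₂ hkp₁ f (lift2 hp₁ a + lift2 hp₁ b)
  have h1 : ((lift2 hp₁ a + lift2 hp₁ b : pbSubmodule p₁ p₂) : S₁ × S₂).2 = a + b := rfl
  rw [map_add, h1] at h
  have h2 : ((f (lift2 hp₁ a) + f (lift2 hp₁ b) : pbSubmodule q₁ q₂) : T₁ × T₂).2
      = e2f hp₁ f a + e2f hp₁ f b := rfl
  rw [h2] at h
  exact h.symm

lemma e1f_smul (hv₂ : Function.Surjective v₂)
    (hp₁ : Function.Surjective p₁) (hp₂ : Function.Surjective p₂)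
    (hkp₂ : LinearMap.ker p₂ = RingHom.ker v₂ • (⊤ : Submodule R₂ S₂))
    (f : pbSubmodule p₁ p₂ →ₗ[PullbackRing v₁ v₂] pbSubmodule q₁ q₂) (r : R₁) (a : S₁) :
    e1f hp₂ f (r • a) = r • e1f hp₂ f a := by
  obtain ⟨r₂, hr₂⟩ := hv₂ (v₁ r)
  set rr : PullbackRing v₁ v₂ := ⟨(r, r₂), hr₂.symm⟩ with hrr
  have h := key1 hp₁ hp₂ hkp₂ f (rr • lift1 hp₂ a)
  have h1 : ((rr • lift1 hp₂ a : pbSubmodule p₁ p₂) : S₁ × S₂).1 = r • a := rfl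
  rw [map_smul, h1] at h
  have h2 : ((rr • f (lift1 hp₂ a) : pbSubmodule q₁ q₂) : T₁ × T₂).1
      = r • e1f hp₂ f a := rfl
  rw [h2] at h
  exact h.symm

lemma e2f_smul (hv₁ : Function.Surjective v₁)
    (hp₁ : Function.Surjective p₁) (hp₂ : Function.Surjective p₂)
    (hkp₁ : LinearMap.ker p₁ = RingHom.ker v₁ • (⊤ : Submodule R₁ S₁))
    (f : pbSubmodule p₁ p₂ →ₗ[PullbackRing v₁ v₂] pbSubmodule q₁ q₂) (r : R₂) (a : S₂) :
    e2f hp₁ f (r • a) = r • e2f hp₁ f a := by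
  obtain ⟨r₁, hr₁⟩ := hv₁ (v₂ r)
  set rr : PullbackRing v₁ v₂ := ⟨(r₁, r), hr₁⟩ with hrr
  have h := key2 hp₁ hp₂ hkp₁ f (rr • lift2 hp₁ a)
  have h1 : ((rr • lift2 hp₁ a : pbSubmodule p₁ p₂) : S₁ × S₂).2 = r • a := rfl
  rw [map_smul, h1] at h
  have h2 : ((rr • f (lift2 hp₁ a) : pbSubmodule q₁ q₂) : T₁ × T₂).2
      = r • e2f hp₁ f a := rfl
  rw [h2] at h
  exact h.symm

lemma e1f_ker (hp₁ : Function.Surjective p₁) (hp₂ : Function.Surjective p₂)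
    (hkp₁ : LinearMap.ker p₁ = RingHom.ker v₁ • (⊤ : Submodule R₁ S₁))
    (hkp₂ : LinearMap.ker p₂ = RingHom.ker v₂ • (⊤ : Submodule R₂ S₂))
    (f : pbSubmodule p₁ p₂ →ₗ[PullbackRing v₁ v₂] pbSubmodule q₁ q₂) (a : S₁)
    (ha : p₁ a = 0) : q₁ (e1f hp₂ f a) = 0 := by
  have hm : (a, (0:S₂)) ∈ pbSubmodule p₁ p₂ := by
    show p₁ a = p₂ 0
    rw [ha, map_zero]
  set s : pbSubmodule p₁ p₂ := ⟨(a, 0), hm⟩ with hs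
  have h1 : e1f hp₂ f a = ((f s : T₁ × T₂)).1 := (key1 hp₁ hp₂ hkp₂ f s).symm
  have h2 : ((f s : T₁ × T₂)).2 = 0 := zero2 hp₂ hkp₁ f s rfl
  rw [h1, pb_mem (f s), h2, map_zero]

end Aux
/-- the separated diagram of a separated module is unique: if two separated
diagrams have (compatibly) isomorphic pullbacks, then there are isomorphisms `Sᵢ ≅ Tᵢ` of
`Rᵢ`-modules and `S̄ ≅ T̄'` commuting with the structure maps (and inducing the given
isomorphism of pullbacks). -/
theorem statement_10 {R₁ R₂ Rb : Type} [CommRing R₁] [CommRing R₂] [CommRing Rb]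
    (v₁ : R₁ →+* Rb) (v₂ : R₂ →+* Rb)
    (hv₁ : Function.Surjective v₁) (hv₂ : Function.Surjective v₂)
    (S₁ S₂ Sb T₁ T₂ Tb : Type)
    [AddCommGroup S₁] [AddCommGroup S₂] [AddCommGroup Sb]
    [AddCommGroup T₁] [AddCommGroup T₂] [AddCommGroup Tb]
    [Module R₁ S₁] [Module R₂ S₂] [Module Rb Sb]
    [Module R₁ T₁] [Module R₂ T₂] [Module Rb Tb]
    (p₁ : S₁ →ₛₗ[v₁] Sb) (p₂ : S₂ →ₛₗ[v₂] Sb)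
    (q₁ : T₁ →ₛₗ[v₁] Tb) (q₂ : T₂ →ₛₗ[v₂] Tb)
    -- both diagrams are separated:
    (hp₁ : Function.Surjective p₁) (hp₂ : Function.Surjective p₂)
    (hq₁ : Function.Surjective q₁) (hq₂ : Function.Surjective q₂)
    (hkp₁ : LinearMap.ker p₁ = RingHom.ker v₁ • (⊤ : Submodule R₁ S₁))
    (hkp₂ : LinearMap.ker p₂ = RingHom.ker v₂ • (⊤ : Submodule R₂ S₂))
    (hkq₁ : LinearMap.ker q₁ = RingHom.ker v₁ • (⊤ : Submodule R₁ T₁))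
    (hkq₂ : LinearMap.ker q₂ = RingHom.ker v₂ • (⊤ : Submodule R₂ T₂))
    -- the pullbacks are isomorphic:
    (e : pbSubmodule p₁ p₂ ≃ₗ[PullbackRing v₁ v₂] pbSubmodule q₁ q₂) :
    ∃ (e₁ : S₁ ≃ₗ[R₁] T₁) (e₂ : S₂ ≃ₗ[R₂] T₂) (eb : Sb ≃+ Tb),
      (∀ s₁ : S₁, eb (p₁ s₁) = q₁ (e₁ s₁)) ∧
      (∀ s₂ : S₂, eb (p₂ s₂) = q₂ (e₂ s₂)) ∧
      (∀ s : pbSubmodule p₁ p₂,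
        ((e s : T₁ × T₂)) = (e₁ (s : S₁ × S₂).1, e₂ (s : S₁ × S₂).2)) := by

  classical
  set f : pbSubmodule p₁ p₂ →ₗ[PullbackRing v₁ v₂] pbSubmodule q₁ q₂ := e.toLinearMap with hf
  set g : pbSubmodule q₁ q₂ →ₗ[PullbackRing v₁ v₂] pbSubmodule p₁ p₂ := e.symm.toLinearMap with hg
  have hgf : ∀ s, g (f s) = s := fun s => e.symm_apply_apply s
  have hfg : ∀ t, f (g t) = t := fun t => e.apply_symm_apply t
  have li1 : ∀ a, e1f hq₂ g (e1f hp₂ f a) = a := by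
    intro a
    have h := key1 hq₁ hq₂ hkq₂ g (f (lift1 hp₂ a))
    rw [hgf] at h
    exact h.symm
  have ri1 : ∀ a, e1f hp₂ f (e1f hq₂ g a) = a := by
    intro a
    have h := key1 hp₁ hp₂ hkp₂ f (g (lift1 hq₂ a))
    rw [hfg] at h
    exact h.symm
  have li2 : ∀ a, e2f hq₁ g (e2f hp₁ f a) = a := by
    intro a
    have h := key2 hq₁ hq₂ hkq₁ g (f (lift2 hp₁ a))
    rw [hgf] at h
    exact h.symm
  have ri2 : ∀ a, e2f hp₁ f (e2f hq₁ g a) = a := by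
    intro a
    have h := key2 hp₁ hp₂ hkp₁ f (g (lift2 hq₁ a))
    rw [hfg] at h
    exact h.symm
  have ker1 : ∀ a, p₁ a = 0 → q₁ (e1f hp₂ f a) = 0 := e1f_ker hp₁ hp₂ hkp₁ hkp₂ f
  have ker1' : ∀ a, q₁ a = 0 → p₁ (e1f hq₂ g a) = 0 := e1f_ker hq₁ hq₂ hkq₁ hkq₂ g
  have e1sub : ∀ a b, e1f hp₂ f (a - b) = e1f hp₂ f a - e1f hp₂ f b := by
    intro a b
    have h := e1f_add hp₁ hp₂ hkp₂ f b (a - b)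
    rw [add_sub_cancel] at h
    rw [eq_sub_iff_add_eq, add_comm, ← h]
  have e1sub' : ∀ a b, e1f hq₂ g (a - b) = e1f hq₂ g a - e1f hq₂ g b := by
    intro a b
    have h := e1f_add hq₁ hq₂ hkq₂ g b (a - b)
    rw [add_sub_cancel] at h
    rw [eq_sub_iff_add_eq, add_comm, ← h]
  have wd : ∀ a b, p₁ a = p₁ b → q₁ (e1f hp₂ f a) = q₁ (e1f hp₂ f b) := by
    intro a b h
    have h2 := ker1 (a - b) (by rw [map_sub, h, sub_self])
    rw [e1sub, map_sub, sub_eq_zero] at h2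
    exact h2
  have wd' : ∀ a b, q₁ a = q₁ b → p₁ (e1f hq₂ g a) = p₁ (e1f hq₂ g b) := by
    intro a b h
    have h2 := ker1' (a - b) (by rw [map_sub, h, sub_self])
    rw [e1sub', map_sub, sub_eq_zero] at h2
    exact h2
  set ebf : Sb → Tb := fun b => q₁ (e1f hp₂ f ((hp₁ b).choose)) with hebf
  set ebg : Tb → Sb := fun c => p₁ (e1f hq₂ g ((hq₁ c).choose)) with hebg
  have ebf_p₁ : ∀ a, ebf (p₁ a) = q₁ (e1f hp₂ f a) :=
    fun a => wd _ _ ((hp₁ (p₁ a)).choose_spec)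
  have ebg_q₁ : ∀ t, ebg (q₁ t) = p₁ (e1f hq₂ g t) :=
    fun t => wd' _ _ ((hq₁ (q₁ t)).choose_spec)
  refine ⟨{ toFun := e1f hp₂ f
            invFun := e1f hq₂ g
            map_add' := e1f_add hp₁ hp₂ hkp₂ f
            map_smul' := e1f_smul hv₂ hp₁ hp₂ hkp₂ f
            left_inv := li1
            right_inv := ri1 },
          { toFun := e2f hp₁ f
            invFun := e2f hq₁ g
            map_add' := e2f_add hp₁ hp₂ hkp₁ f
            map_smul' := e2f_smul hv₁ hp₁ hp₂ hkp₁ f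
            left_inv := li2
            right_inv := ri2 },
          { toFun := ebf
            invFun := ebg
            left_inv := by
              intro b
              obtain ⟨a, rfl⟩ := hp₁ b
              rw [ebf_p₁, ebg_q₁, li1]
            right_inv := by
              intro c
              obtain ⟨t, rfl⟩ := hq₁ c
              rw [ebg_q₁, ebf_p₁, ri1]
            map_add' := by
              intro b c
              obtain ⟨a, rfl⟩ := hp₁ b
              obtain ⟨a', rfl⟩ := hp₁ c
              show ebf (p₁ a + p₁ a') = ebf (p₁ a) + ebf (p₁ a')
              rw [← map_add, ebf_p₁, ebf_p₁, ebf_p₁, e1f_add hp₁ hp₂ hkp₂ f, map_add] },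
          ?_, ?_, ?_⟩
  · exact ebf_p₁
  · intro b
    have haa : p₁ ((hp₁ (p₂ b)).choose) = p₂ b := (hp₁ (p₂ b)).choose_spec
    have hm : ((hp₁ (p₂ b)).choose, b) ∈ pbSubmodule p₁ p₂ := haa
    refine ((congrArg ebf haa.symm).trans ((ebf_p₁ _).trans ?_))
    calc q₁ (e1f hp₂ f ((hp₁ (p₂ b)).choose))
        = q₁ (((f ⟨((hp₁ (p₂ b)).choose, b), hm⟩ : pbSubmodule q₁ q₂) : T₁ × T₂).1) :=
          congrArg q₁ (key1 hp₁ hp₂ hkp₂ f ⟨((hp₁ (p₂ b)).choose, b), hm⟩).symm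
      _ = q₂ (((f ⟨((hp₁ (p₂ b)).choose, b), hm⟩ : pbSubmodule q₁ q₂) : T₁ × T₂).2) :=
          pb_mem _
      _ = q₂ (e2f hp₁ f b) := congrArg q₂ (key2 hp₁ hp₂ hkp₁ f ⟨((hp₁ (p₂ b)).choose, b), hm⟩)
  · intro s
    exact Prod.ext (key1 hp₁ hp₂ hkp₂ f s) (key2 hp₁ hp₂ hkp₁ f s)
end

section
/- Let f : M → N be a homomorphism of pullback modules induced by (f₁, f̄, f₂) between pullback diagrams (M₁ →p₁ M̄ ←p₂ M₂) and (N₁ → N̄ ← N₂). Then f is injective if and only if the map μ : ker f₁ ⊕ ker f₂ → M̄ sending (m₁, m₂) ↦ p₁(m₁) − p₂(m₂) is injective. -/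
set_option synthInstance.maxHeartbeats 1000000
set_option maxHeartbeats 1000000

/-- the induced map `f : M → N` of pullback modules is injective iff
`μ : ker f₁ ⊕ ker f₂ → M̄`, `(m₁, m₂) ↦ p₁ m₁ − p₂ m₂`, is injective. -/
theorem statement_11
    {R₁ R₂ Rb : Type} [CommRing R₁] [CommRing R₂] [CommRing Rb]
    (v₁ : R₁ →+* Rb) (v₂ : R₂ →+* Rb)
    (hv₁ : Function.Surjective v₁) (hv₂ : Function.Surjective v₂)
    (M₁ M₂ Mb N₁ N₂ Nb : Type)
    [AddCommGroup M₁] [AddCommGroup M₂] [AddCommGroup Mb]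
    [AddCommGroup N₁] [AddCommGroup N₂] [AddCommGroup Nb]
    [Module R₁ M₁] [Module R₂ M₂] [Module Rb Mb]
    [Module R₁ N₁] [Module R₂ N₂] [Module Rb Nb]
    (p₁ : M₁ →ₛₗ[v₁] Mb) (p₂ : M₂ →ₛₗ[v₂] Mb)
    (q₁ : N₁ →ₛₗ[v₁] Nb) (q₂ : N₂ →ₛₗ[v₂] Nb)
    (f₁ : M₁ →ₗ[R₁] N₁) (f₂ : M₂ →ₗ[R₂] N₂) (fb : Mb →ₗ[Rb] Nb)
    (h₁ : ∀ m₁, q₁ (f₁ m₁) = fb (p₁ m₁)) (h₂ : ∀ m₂, q₂ (f₂ m₂) = fb (p₂ m₂))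
    :
    Function.Injective (inducedMap p₁ p₂ q₁ q₂ f₁ f₂ fb h₁ h₂) ↔
      Function.Injective (fun z : LinearMap.ker f₁ × LinearMap.ker f₂ =>
        p₁ (z.1 : M₁) - p₂ (z.2 : M₂)) := by
  constructor
  · intro hf z z' hz
    have hz : p₁ (z.1 : M₁) - p₂ (z.2 : M₂) = p₁ (z'.1 : M₁) - p₂ (z'.2 : M₂) := hz
    have hp : p₁ ((z.1 : M₁) - (z'.1 : M₁)) = p₂ ((z.2 : M₂) - (z'.2 : M₂)) := by
      rw [map_sub, map_sub]; linear_combination (norm := abel) hz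
    set m : pbSubmodule p₁ p₂ := ⟨((z.1 : M₁) - (z'.1 : M₁), (z.2 : M₂) - (z'.2 : M₂)), hp⟩
    have hm : inducedMap p₁ p₂ q₁ q₂ f₁ f₂ fb h₁ h₂ m =
        inducedMap p₁ p₂ q₁ q₂ f₁ f₂ fb h₁ h₂ 0 := by
      apply Subtype.ext
      show (f₁ _, f₂ _) = (f₁ _, f₂ _)
      simp [m, map_sub, z.1.2, z.2.2, z'.1.2, z'.2.2]
    have := hf hm
    have hc : ((z.1 : M₁) - (z'.1 : M₁), (z.2 : M₂) - (z'.2 : M₂)) = ((0 : M₁), (0 : M₂)) :=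
      congrArg Subtype.val this
    have e1 : (z.1 : M₁) = (z'.1 : M₁) := by
      have := congrArg Prod.fst hc; simpa [sub_eq_zero] using this
    have e2 : (z.2 : M₂) = (z'.2 : M₂) := by
      have := congrArg Prod.snd hc; simpa [sub_eq_zero] using this
    exact Prod.ext (Subtype.ext e1) (Subtype.ext e2)
  · intro hμ m m' hm
    have hc : (f₁ (m : M₁ × M₂).1, f₂ (m : M₁ × M₂).2)
        = (f₁ (m' : M₁ × M₂).1, f₂ (m' : M₁ × M₂).2) := congrArg Subtype.val hm
    have hf₁ : f₁ ((m : M₁ × M₂).1 - (m' : M₁ × M₂).1) = 0 := by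
      have := congrArg Prod.fst hc; simp [map_sub, sub_eq_zero]; exact this
    have hf₂ : f₂ ((m : M₁ × M₂).2 - (m' : M₁ × M₂).2) = 0 := by
      have := congrArg Prod.snd hc; simp [map_sub, sub_eq_zero]; exact this
    set z : LinearMap.ker f₁ × LinearMap.ker f₂ :=
      (⟨_, hf₁⟩, ⟨_, hf₂⟩)
    have hμz : (fun z : LinearMap.ker f₁ × LinearMap.ker f₂ =>
        p₁ (z.1 : M₁) - p₂ (z.2 : M₂)) z
        = (fun z : LinearMap.ker f₁ × LinearMap.ker f₂ =>
        p₁ (z.1 : M₁) - p₂ (z.2 : M₂)) (0, 0) := by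
      show p₁ _ - p₂ _ = p₁ _ - p₂ _
      have hmm : p₁ (m : M₁ × M₂).1 = p₂ (m : M₁ × M₂).2 := m.2
      have hmm' : p₁ (m' : M₁ × M₂).1 = p₂ (m' : M₁ × M₂).2 := m'.2
      rw [map_sub, map_sub]
      simp only [ZeroMemClass.coe_zero, map_zero]
      linear_combination (norm := abel) hmm - hmm'
    have hz0 := hμ hμz
    have e1 : (m : M₁ × M₂).1 = (m' : M₁ × M₂).1 := by
      have := congrArg (fun w => ((Prod.fst w : LinearMap.ker f₁) : M₁)) hz0
      simpa [z, sub_eq_zero] using this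
    have e2 : (m : M₁ × M₂).2 = (m' : M₁ × M₂).2 := by
      have := congrArg (fun w => ((Prod.snd w : LinearMap.ker f₂) : M₂)) hz0
      simpa [z, sub_eq_zero] using this
    exact Subtype.ext (Prod.ext e1 e2)
end

section
/- A homomorphism f : M → N of pullback modules induced by (f₁, f̄, f₂) is injective if and only if (1) ker fᵢ ∩ ker pᵢ = 0 for i = 1,2, and (2) p₁(ker f₁) ∩ p₂(ker f₂) = 0, where pᵢ : Mᵢ → M̄ are the structure maps. -/
set_option synthInstance.maxHeartbeats 1000000
set_option maxHeartbeats 1000000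

/-- the induced map `f : M → N` of pullback modules is injective iff
`ker fᵢ ∩ ker pᵢ = 0` for `i = 1, 2` and `p₁(ker f₁) ∩ p₂(ker f₂) = 0`. -/
theorem statement_12
    {R₁ R₂ Rb : Type} [CommRing R₁] [CommRing R₂] [CommRing Rb]
    (v₁ : R₁ →+* Rb) (v₂ : R₂ →+* Rb)
    (hv₁ : Function.Surjective v₁) (hv₂ : Function.Surjective v₂)
    (M₁ M₂ Mb N₁ N₂ Nb : Type)
    [AddCommGroup M₁] [AddCommGroup M₂] [AddCommGroup Mb]
    [AddCommGroup N₁] [AddCommGroup N₂] [AddCommGroup Nb]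
    [Module R₁ M₁] [Module R₂ M₂] [Module Rb Mb]
    [Module R₁ N₁] [Module R₂ N₂] [Module Rb Nb]
    (p₁ : M₁ →ₛₗ[v₁] Mb) (p₂ : M₂ →ₛₗ[v₂] Mb)
    (q₁ : N₁ →ₛₗ[v₁] Nb) (q₂ : N₂ →ₛₗ[v₂] Nb)
    (f₁ : M₁ →ₗ[R₁] N₁) (f₂ : M₂ →ₗ[R₂] N₂) (fb : Mb →ₗ[Rb] Nb)
    (h₁ : ∀ m₁, q₁ (f₁ m₁) = fb (p₁ m₁)) (h₂ : ∀ m₂, q₂ (f₂ m₂) = fb (p₂ m₂))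
    :
    Function.Injective (inducedMap p₁ p₂ q₁ q₂ f₁ f₂ fb h₁ h₂) ↔
      (LinearMap.ker f₁ ⊓ LinearMap.ker p₁ = ⊥ ∧
       LinearMap.ker f₂ ⊓ LinearMap.ker p₂ = ⊥ ∧
       (p₁ '' (LinearMap.ker f₁ : Set M₁)) ∩ (p₂ '' (LinearMap.ker f₂ : Set M₂)) = {0}) := by
  constructor
  · intro hinj
    refine ⟨?_, ?_, ?_⟩
    · rw [eq_bot_iff]
      rintro m₁ ⟨hf, hp⟩
      have hmem : (m₁, (0 : M₂)) ∈ pbSubmodule p₁ p₂ := by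
        show p₁ m₁ = p₂ 0
        simp [LinearMap.mem_ker.mp hp]
      have : inducedMap p₁ p₂ q₁ q₂ f₁ f₂ fb h₁ h₂ ⟨(m₁, 0), hmem⟩ =
          inducedMap p₁ p₂ q₁ q₂ f₁ f₂ fb h₁ h₂ 0 := by
        apply Subtype.ext
        show (f₁ m₁, f₂ 0) = (f₁ 0, f₂ 0)
        simp [LinearMap.mem_ker.mp hf]
      have := congrArg (fun x : pbSubmodule p₁ p₂ => (x : M₁ × M₂).1) (hinj this)
      simpa using this
    · rw [eq_bot_iff]
      rintro m₂ ⟨hf, hp⟩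
      have hmem : ((0 : M₁), m₂) ∈ pbSubmodule p₁ p₂ := by
        show p₁ 0 = p₂ m₂
        simp [LinearMap.mem_ker.mp hp]
      have : inducedMap p₁ p₂ q₁ q₂ f₁ f₂ fb h₁ h₂ ⟨(0, m₂), hmem⟩ =
          inducedMap p₁ p₂ q₁ q₂ f₁ f₂ fb h₁ h₂ 0 := by
        apply Subtype.ext
        show (f₁ 0, f₂ m₂) = (f₁ 0, f₂ 0)
        simp [LinearMap.mem_ker.mp hf]
      have := congrArg (fun x : pbSubmodule p₁ p₂ => (x : M₁ × M₂).2) (hinj this)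
      simpa using this
    · apply Set.eq_singleton_iff_unique_mem.mpr
      constructor
      · exact ⟨⟨0, by simp, by simp⟩, ⟨0, by simp, by simp⟩⟩
      · rintro x ⟨⟨m₁, hm₁, rfl⟩, ⟨m₂, hm₂, hx⟩⟩
        have hmem : (m₁, m₂) ∈ pbSubmodule p₁ p₂ := hx.symm
        have : inducedMap p₁ p₂ q₁ q₂ f₁ f₂ fb h₁ h₂ ⟨(m₁, m₂), hmem⟩ =
            inducedMap p₁ p₂ q₁ q₂ f₁ f₂ fb h₁ h₂ 0 := by
          apply Subtype.ext
          show (f₁ m₁, f₂ m₂) = (f₁ 0, f₂ 0)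
          simp [LinearMap.mem_ker.mp hm₁, LinearMap.mem_ker.mp hm₂]
        have h0 := congrArg (fun x : pbSubmodule p₁ p₂ => (x : M₁ × M₂).1) (hinj this)
        simp only at h0
        rw [show (m₁ : M₁) = 0 from h0]
        simp
  · rintro ⟨hk₁, hk₂, hcap⟩ ⟨m, hm⟩ ⟨m', hm'⟩ heq
    have hf₁ : f₁ (m.1 - m'.1) = 0 := by
      have := congrArg (fun x : pbSubmodule q₁ q₂ => (x : N₁ × N₂).1) heq
      simp only [inducedMap] at this
      simp [map_sub, this]
    have hf₂ : f₂ (m.2 - m'.2) = 0 := by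
      have := congrArg (fun x : pbSubmodule q₁ q₂ => (x : N₁ × N₂).2) heq
      simp only [inducedMap] at this
      simp [map_sub, this]
    have hpd : p₁ (m.1 - m'.1) = p₂ (m.2 - m'.2) := by
      have hm : p₁ m.1 = p₂ m.2 := hm
      have hm' : p₁ m'.1 = p₂ m'.2 := hm'
      simp [map_sub, hm, hm']
    have hx : p₁ (m.1 - m'.1) ∈ (p₁ '' (LinearMap.ker f₁ : Set M₁)) ∩
        (p₂ '' (LinearMap.ker f₂ : Set M₂)) :=
      ⟨⟨_, LinearMap.mem_ker.mpr hf₁, rfl⟩, ⟨_, LinearMap.mem_ker.mpr hf₂, hpd.symm⟩⟩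
    rw [hcap] at hx
    have h1 : m.1 - m'.1 ∈ LinearMap.ker f₁ ⊓ LinearMap.ker p₁ :=
      ⟨LinearMap.mem_ker.mpr hf₁, LinearMap.mem_ker.mpr hx⟩
    have h2 : m.2 - m'.2 ∈ LinearMap.ker f₂ ⊓ LinearMap.ker p₂ :=
      ⟨LinearMap.mem_ker.mpr hf₂, LinearMap.mem_ker.mpr (hpd ▸ hx)⟩
    rw [hk₁] at h1
    rw [hk₂] at h2
    apply Subtype.ext
    apply Prod.ext
    · exact sub_eq_zero.mp h1
    · exact sub_eq_zero.mp h2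
end

section
/- Let f : M → N be a homomorphism of pullback modules induced by (f₁, f̄, f₂), with N given by a preseparated diagram (both structure maps N_i → N̄ surjective). If f is surjective, then f₁ and f₂ are surjective. -/
set_option synthInstance.maxHeartbeats 1000000
set_option maxHeartbeats 1000000

/-- if the diagram for `N` is preseparated (both `qᵢ` surjective) and the
induced map `f : M → N` is surjective, then `f₁` and `f₂` are surjective. -/
theorem statement_13
    {R₁ R₂ Rb : Type} [CommRing R₁] [CommRing R₂] [CommRing Rb]
    (v₁ : R₁ →+* Rb) (v₂ : R₂ →+* Rb)
    (hv₁ : Function.Surjective v₁) (hv₂ : Function.Surjective v₂)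
    (M₁ M₂ Mb N₁ N₂ Nb : Type)
    [AddCommGroup M₁] [AddCommGroup M₂] [AddCommGroup Mb]
    [AddCommGroup N₁] [AddCommGroup N₂] [AddCommGroup Nb]
    [Module R₁ M₁] [Module R₂ M₂] [Module Rb Mb]
    [Module R₁ N₁] [Module R₂ N₂] [Module Rb Nb]
    (p₁ : M₁ →ₛₗ[v₁] Mb) (p₂ : M₂ →ₛₗ[v₂] Mb)
    (q₁ : N₁ →ₛₗ[v₁] Nb) (q₂ : N₂ →ₛₗ[v₂] Nb)
    (f₁ : M₁ →ₗ[R₁] N₁) (f₂ : M₂ →ₗ[R₂] N₂) (fb : Mb →ₗ[Rb] Nb)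
    (h₁ : ∀ m₁, q₁ (f₁ m₁) = fb (p₁ m₁)) (h₂ : ∀ m₂, q₂ (f₂ m₂) = fb (p₂ m₂))
    (hq₁ : Function.Surjective q₁) (hq₂ : Function.Surjective q₂)
    (hf : Function.Surjective (inducedMap p₁ p₂ q₁ q₂ f₁ f₂ fb h₁ h₂))
    :
    Function.Surjective f₁ ∧ Function.Surjective f₂ := by
  constructor
  · intro n₁
    obtain ⟨n₂, hn₂⟩ := hq₂ (q₁ n₁)
    obtain ⟨m, hm⟩ := hf ⟨(n₁, n₂), hn₂.symm⟩
    exact ⟨(m : M₁ × M₂).1, congrArg Prod.fst (congrArg Subtype.val hm)⟩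
  · intro n₂
    obtain ⟨n₁, hn₁⟩ := hq₁ (q₂ n₂)
    obtain ⟨m, hm⟩ := hf ⟨(n₁, n₂), hn₁⟩
    exact ⟨(m : M₁ × M₂).2, congrArg Prod.snd (congrArg Subtype.val hm)⟩
end

section
/- Let f : M → N be induced by (f₁, f̄, f₂) between pullback diagrams, and let cᵢ : ker fᵢ → ker f̄ be the restrictions of the structure maps pᵢ : Mᵢ → M̄. If f₁ and f₂ are surjective and at least one of c₁, c₂ is surjective, then f is surjective. -/
set_option synthInstance.maxHeartbeats 1000000
set_option maxHeartbeats 1000000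

/-- if `f₁` and `f₂` are surjective and one of the restrictions
`cᵢ : ker fᵢ → ker f̄` of `pᵢ` is surjective, then the induced map `f : M → N` is
surjective. -/
theorem statement_14
    {R₁ R₂ Rb : Type} [CommRing R₁] [CommRing R₂] [CommRing Rb]
    (v₁ : R₁ →+* Rb) (v₂ : R₂ →+* Rb)
    (hv₁ : Function.Surjective v₁) (hv₂ : Function.Surjective v₂)
    (M₁ M₂ Mb N₁ N₂ Nb : Type)
    [AddCommGroup M₁] [AddCommGroup M₂] [AddCommGroup Mb]
    [AddCommGroup N₁] [AddCommGroup N₂] [AddCommGroup Nb]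
    [Module R₁ M₁] [Module R₂ M₂] [Module Rb Mb]
    [Module R₁ N₁] [Module R₂ N₂] [Module Rb Nb]
    (p₁ : M₁ →ₛₗ[v₁] Mb) (p₂ : M₂ →ₛₗ[v₂] Mb)
    (q₁ : N₁ →ₛₗ[v₁] Nb) (q₂ : N₂ →ₛₗ[v₂] Nb)
    (f₁ : M₁ →ₗ[R₁] N₁) (f₂ : M₂ →ₗ[R₂] N₂) (fb : Mb →ₗ[Rb] Nb)
    (h₁ : ∀ m₁, q₁ (f₁ m₁) = fb (p₁ m₁)) (h₂ : ∀ m₂, q₂ (f₂ m₂) = fb (p₂ m₂))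
    (hf₁ : Function.Surjective f₁) (hf₂ : Function.Surjective f₂)
    (hc : (∀ y ∈ LinearMap.ker fb, ∃ x ∈ LinearMap.ker f₁, p₁ x = y) ∨
          (∀ y ∈ LinearMap.ker fb, ∃ x ∈ LinearMap.ker f₂, p₂ x = y))
    :
    Function.Surjective (inducedMap p₁ p₂ q₁ q₂ f₁ f₂ fb h₁ h₂) := by
  rintro ⟨⟨n₁, n₂⟩, hn⟩
  obtain ⟨m₁, hm₁⟩ := hf₁ n₁
  obtain ⟨m₂, hm₂⟩ := hf₂ n₂
  have hn' : q₁ n₁ = q₂ n₂ := hn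
  have hker : fb (p₂ m₂ - p₁ m₁) = 0 := by
    rw [map_sub, ← h₁, ← h₂, hm₁, hm₂, hn', sub_self]
  rcases hc with hc | hc
  · obtain ⟨x, hx, hpx⟩ := hc _ hker
    refine ⟨⟨(m₁ + x, m₂), ?_⟩, ?_⟩
    · show p₁ (m₁ + x) = p₂ m₂
      rw [map_add, hpx]; abel
    · apply Subtype.ext
      show (f₁ (m₁ + x), f₂ m₂) = (n₁, n₂)
      rw [map_add, LinearMap.mem_ker.mp hx, add_zero, hm₁, hm₂]
  · have hker' : fb (p₁ m₁ - p₂ m₂) = 0 := by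
      rw [map_sub, ← h₁, ← h₂, hm₁, hm₂, hn', sub_self]
    obtain ⟨x, hx, hpx⟩ := hc _ hker'
    refine ⟨⟨(m₁, m₂ + x), ?_⟩, ?_⟩
    · show p₁ m₁ = p₂ (m₂ + x)
      rw [map_add, hpx]; abel
    · apply Subtype.ext
      show (f₁ m₁, f₂ (m₂ + x)) = (n₁, n₂)
      rw [map_add, LinearMap.mem_ker.mp hx, add_zero, hm₁, hm₂]
end

section
/- Let f : M → N be induced by (f₁, f̄, f₂) between pullback diagrams. If f₁ is surjective and the canonical map from M₂ to the pullback of (M̄ →f̄ N̄ ←q₂ N₂) is surjective, then f : M → N is surjective. -/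
set_option synthInstance.maxHeartbeats 1000000
set_option maxHeartbeats 1000000

/-- if `f₁` is surjective and the canonical map from `M₂` to the pullback
of `(M̄ → N̄ ← N₂)`, `m₂ ↦ (p₂ m₂, f₂ m₂)`, is surjective, then the induced map
`f : M → N` is surjective. -/
theorem statement_15
    {R₁ R₂ Rb : Type} [CommRing R₁] [CommRing R₂] [CommRing Rb]
    (v₁ : R₁ →+* Rb) (v₂ : R₂ →+* Rb)
    (hv₁ : Function.Surjective v₁) (hv₂ : Function.Surjective v₂)
    (M₁ M₂ Mb N₁ N₂ Nb : Type)
    [AddCommGroup M₁] [AddCommGroup M₂] [AddCommGroup Mb]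
    [AddCommGroup N₁] [AddCommGroup N₂] [AddCommGroup Nb]
    [Module R₁ M₁] [Module R₂ M₂] [Module Rb Mb]
    [Module R₁ N₁] [Module R₂ N₂] [Module Rb Nb]
    (p₁ : M₁ →ₛₗ[v₁] Mb) (p₂ : M₂ →ₛₗ[v₂] Mb)
    (q₁ : N₁ →ₛₗ[v₁] Nb) (q₂ : N₂ →ₛₗ[v₂] Nb)
    (f₁ : M₁ →ₗ[R₁] N₁) (f₂ : M₂ →ₗ[R₂] N₂) (fb : Mb →ₗ[Rb] Nb)
    (h₁ : ∀ m₁, q₁ (f₁ m₁) = fb (p₁ m₁)) (h₂ : ∀ m₂, q₂ (f₂ m₂) = fb (p₂ m₂))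
    (hf₁ : Function.Surjective f₁)
    (hc : ∀ (mb : Mb) (n₂ : N₂), fb mb = q₂ n₂ → ∃ m₂ : M₂, p₂ m₂ = mb ∧ f₂ m₂ = n₂)
    :
    Function.Surjective (inducedMap p₁ p₂ q₁ q₂ f₁ f₂ fb h₁ h₂) := by
  rintro ⟨⟨n₁, n₂⟩, hn⟩
  obtain ⟨m₁, hm₁⟩ := hf₁ n₁
  have hfb : fb (p₁ m₁) = q₂ n₂ := by
    rw [← h₁, hm₁]; exact hn
  obtain ⟨m₂, hp, hf⟩ := hc (p₁ m₁) n₂ hfb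
  refine ⟨⟨(m₁, m₂), hp.symm⟩, ?_⟩
  apply Subtype.ext
  show (f₁ m₁, f₂ m₂) = (n₁, n₂)
  rw [hm₁, hf]
end

section
/- Given a commutative 3×3 diagram of abelian groups with rows (Lᵢ → Mᵢ → Nᵢ) and (L̄ → M̄ → N̄), columns being pullback diagrams, where the two rows of component maps are exact, f̄ : L̄ → M̄ is injective, and the maps cᵢ : Lᵢ → L̄ are surjective, the induced sequence of pullbacks L → M → N → 0 is exact (the induced map M → N is surjective with kernel equal to the image of L → M). Moreover, if the diagram for M is separated, so is the diagram for N. -/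
set_option synthInstance.maxHeartbeats 1000000
set_option maxHeartbeats 1000000

/-- given a commutative 3×3 diagram whose columns are pullback diagrams,
whose rows of component maps `Lᵢ → Mᵢ → Nᵢ → 0` and `L̄ → M̄ → N̄ → 0` are exact with
`f̄ : L̄ → M̄` injective, and whose structure maps `cᵢ : Lᵢ → L̄` are surjective, the
induced sequence of pullbacks `L → M → N → 0` is exact; moreover if the diagram for `M`
is separated then so is the diagram for `N`. -/
theorem statement_16
    {R₁ R₂ Rb : Type} [CommRing R₁] [CommRing R₂] [CommRing Rb]
    (v₁ : R₁ →+* Rb) (v₂ : R₂ →+* Rb)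
    (hv₁ : Function.Surjective v₁) (hv₂ : Function.Surjective v₂)
    (L₁ L₂ Lb M₁ M₂ Mb N₁ N₂ Nb : Type)
    [AddCommGroup L₁] [AddCommGroup L₂] [AddCommGroup Lb]
    [AddCommGroup M₁] [AddCommGroup M₂] [AddCommGroup Mb]
    [AddCommGroup N₁] [AddCommGroup N₂] [AddCommGroup Nb]
    [Module R₁ L₁] [Module R₂ L₂] [Module Rb Lb]
    [Module R₁ M₁] [Module R₂ M₂] [Module Rb Mb]
    [Module R₁ N₁] [Module R₂ N₂] [Module Rb Nb]
    -- the three columns (pullback diagrams)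
    (l₁ : L₁ →ₛₗ[v₁] Lb) (l₂ : L₂ →ₛₗ[v₂] Lb)
    (m₁ : M₁ →ₛₗ[v₁] Mb) (m₂ : M₂ →ₛₗ[v₂] Mb)
    (n₁ : N₁ →ₛₗ[v₁] Nb) (n₂ : N₂ →ₛₗ[v₂] Nb)
    -- the two rows of maps of diagrams
    (f₁ : L₁ →ₗ[R₁] M₁) (f₂ : L₂ →ₗ[R₂] M₂) (fb : Lb →ₗ[Rb] Mb)
    (g₁ : M₁ →ₗ[R₁] N₁) (g₂ : M₂ →ₗ[R₂] N₂) (gb : Mb →ₗ[Rb] Nb)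
    (hf₁ : ∀ x, m₁ (f₁ x) = fb (l₁ x)) (hf₂ : ∀ x, m₂ (f₂ x) = fb (l₂ x))
    (hg₁ : ∀ x, n₁ (g₁ x) = gb (m₁ x)) (hg₂ : ∀ x, n₂ (g₂ x) = gb (m₂ x))
    -- exactness of the rows
    (hex₁ : Function.Surjective g₁ ∧ LinearMap.range f₁ = LinearMap.ker g₁)
    (hex₂ : Function.Surjective g₂ ∧ LinearMap.range f₂ = LinearMap.ker g₂)
    (hexb : Function.Surjective gb ∧ LinearMap.range fb = LinearMap.ker gb)
    (hfb : Function.Injective fb)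
    -- the structure maps `cᵢ : Lᵢ → L̄` are surjective
    (hc₁ : Function.Surjective l₁) (hc₂ : Function.Surjective l₂) :
    Function.Surjective (inducedMap m₁ m₂ n₁ n₂ g₁ g₂ gb hg₁ hg₂) ∧
    (∀ m : pbSubmodule m₁ m₂,
      inducedMap m₁ m₂ n₁ n₂ g₁ g₂ gb hg₁ hg₂ m = 0 ↔
        m ∈ Set.range (inducedMap l₁ l₂ m₁ m₂ f₁ f₂ fb hf₁ hf₂)) ∧
    ((Function.Surjective m₁ ∧ Function.Surjective m₂ ∧
      LinearMap.ker m₁ = RingHom.ker v₁ • (⊤ : Submodule R₁ M₁) ∧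
      LinearMap.ker m₂ = RingHom.ker v₂ • (⊤ : Submodule R₂ M₂)) →
     (Function.Surjective n₁ ∧ Function.Surjective n₂ ∧
      LinearMap.ker n₁ = RingHom.ker v₁ • (⊤ : Submodule R₁ N₁) ∧
      LinearMap.ker n₂ = RingHom.ker v₂ • (⊤ : Submodule R₂ N₂))) := by
  obtain ⟨hg₁s, hker₁⟩ := hex₁
  obtain ⟨hg₂s, hker₂⟩ := hex₂
  obtain ⟨hgbs, hkerb⟩ := hexb
  refine ⟨?_, ?_, ?_⟩
  · rintro ⟨⟨y₁, y₂⟩, hy⟩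
    have hy' : n₁ y₁ = n₂ y₂ := hy
    obtain ⟨x₁, hx₁⟩ := hg₁s y₁
    obtain ⟨x₂, hx₂⟩ := hg₂s y₂
    have hz0 : gb (m₁ x₁ - m₂ x₂) = 0 := by
      rw [map_sub, ← hg₁, ← hg₂, hx₁, hx₂, hy', sub_self]
    have : m₁ x₁ - m₂ x₂ ∈ LinearMap.range fb := by rw [hkerb]; exact hz0
    obtain ⟨lb, hlb⟩ := this
    obtain ⟨z, hz⟩ := hc₁ lb
    have hcond : m₁ (x₁ - f₁ z) = m₂ x₂ := by
      rw [map_sub, hf₁, hz, hlb, sub_sub_cancel]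
    refine ⟨⟨(x₁ - f₁ z, x₂), hcond⟩, ?_⟩
    apply Subtype.ext
    have hgf : g₁ (f₁ z) = 0 := by
      have : f₁ z ∈ LinearMap.ker g₁ := hker₁ ▸ LinearMap.mem_range_self f₁ z
      exact this
    show (g₁ (x₁ - f₁ z), g₂ x₂) = (y₁, y₂)
    rw [map_sub, hgf, sub_zero, hx₁, hx₂]
  · rintro ⟨⟨x₁, x₂⟩, hx⟩
    have hx' : m₁ x₁ = m₂ x₂ := hx
    constructor
    · intro h
      have h' : (g₁ x₁, g₂ x₂) = ((0 : N₁), (0 : N₂)) := congrArg Subtype.val h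
      have hg1 : g₁ x₁ = 0 := congrArg Prod.fst h'
      have hg2 : g₂ x₂ = 0 := congrArg Prod.snd h'
      have : x₁ ∈ LinearMap.range f₁ := by rw [hker₁]; exact hg1
      obtain ⟨z₁, hz₁⟩ := this
      have : x₂ ∈ LinearMap.range f₂ := by rw [hker₂]; exact hg2
      obtain ⟨z₂, hz₂⟩ := this
      have hl : l₁ z₁ = l₂ z₂ := by
        apply hfb
        rw [← hf₁, ← hf₂, hz₁, hz₂, hx']
      exact ⟨⟨(z₁, z₂), hl⟩, Subtype.ext (by show (f₁ z₁, f₂ z₂) = (x₁, x₂); rw [hz₁, hz₂])⟩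
    · rintro ⟨⟨⟨z₁, z₂⟩, hz⟩, hmap⟩
      have h' : (f₁ z₁, f₂ z₂) = (x₁, x₂) := congrArg Subtype.val hmap
      have h1 : f₁ z₁ = x₁ := congrArg Prod.fst h'
      have h2 : f₂ z₂ = x₂ := congrArg Prod.snd h'
      apply Subtype.ext
      show (g₁ x₁, g₂ x₂) = ((0 : N₁), (0 : N₂))
      have hk1 : x₁ ∈ LinearMap.ker g₁ := hker₁ ▸ ⟨z₁, h1⟩
      have hk2 : x₂ ∈ LinearMap.ker g₂ := hker₂ ▸ ⟨z₂, h2⟩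
      rw [Prod.mk.injEq]
      exact ⟨hk1, hk2⟩
  · rintro ⟨hm₁, hm₂, hkm₁, hkm₂⟩
    refine ⟨?_, ?_, ?_, ?_⟩
    · intro y
      obtain ⟨mb, hmb⟩ := hgbs y
      obtain ⟨m', hm'⟩ := hm₁ mb
      exact ⟨g₁ m', by rw [hg₁, hm', hmb]⟩
    · intro y
      obtain ⟨mb, hmb⟩ := hgbs y
      obtain ⟨m', hm'⟩ := hm₂ mb
      exact ⟨g₂ m', by rw [hg₂, hm', hmb]⟩
    · apply le_antisymm
      · intro y hy
        have hy0 : n₁ y = 0 := hy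
        obtain ⟨m', hm'⟩ := hg₁s y
        have : m₁ m' ∈ LinearMap.range fb := by
          rw [hkerb]
          show gb (m₁ m') = 0
          rw [← hg₁, hm', hy0]
        obtain ⟨lb, hlb⟩ := this
        obtain ⟨z, hz⟩ := hc₁ lb
        have hker : m' - f₁ z ∈ LinearMap.ker m₁ := by
          show m₁ (m' - f₁ z) = 0
          rw [map_sub, hf₁, hz, hlb, sub_self]
        rw [hkm₁] at hker
        have himg : y = g₁ (m' - f₁ z) := by
          have hgf : g₁ (f₁ z) = 0 := by
            have : f₁ z ∈ LinearMap.ker g₁ := hker₁ ▸ LinearMap.mem_range_self f₁ z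
            exact this
          rw [map_sub, hgf, sub_zero, hm']
        have : g₁ (m' - f₁ z) ∈ Submodule.map g₁ (RingHom.ker v₁ • (⊤ : Submodule R₁ M₁)) :=
          Submodule.mem_map_of_mem hker
        rw [Submodule.map_smul''] at this
        rw [himg]
        exact Submodule.smul_mono le_rfl le_top this
      · rw [Submodule.smul_le]
        intro r hr y _
        show n₁ (r • y) = 0
        rw [map_smulₛₗ, show v₁ r = 0 from hr, zero_smul]
    · apply le_antisymm
      · intro y hy
        have hy0 : n₂ y = 0 := hy
        obtain ⟨m', hm'⟩ := hg₂s y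
        have : m₂ m' ∈ LinearMap.range fb := by
          rw [hkerb]
          show gb (m₂ m') = 0
          rw [← hg₂, hm', hy0]
        obtain ⟨lb, hlb⟩ := this
        obtain ⟨z, hz⟩ := hc₂ lb
        have hker : m' - f₂ z ∈ LinearMap.ker m₂ := by
          show m₂ (m' - f₂ z) = 0
          rw [map_sub, hf₂, hz, hlb, sub_self]
        rw [hkm₂] at hker
        have himg : y = g₂ (m' - f₂ z) := by
          have hgf : g₂ (f₂ z) = 0 := by
            have : f₂ z ∈ LinearMap.ker g₂ := hker₂ ▸ LinearMap.mem_range_self f₂ z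
            exact this
          rw [map_sub, hgf, sub_zero, hm']
        have : g₂ (m' - f₂ z) ∈ Submodule.map g₂ (RingHom.ker v₂ • (⊤ : Submodule R₂ M₂)) :=
          Submodule.mem_map_of_mem hker
        rw [Submodule.map_smul''] at this
        rw [himg]
        exact Submodule.smul_mono le_rfl le_top this
      · rw [Submodule.smul_le]
        intro r hr y _
        show n₂ (r • y) = 0
        rw [map_smulₛₗ, show v₂ r = 0 from hr, zero_smul]
end
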